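/- For every pair (a,b) ∈ ℤ_{≥0}² with a + b > 0, the Lebesgue measure of σ_{a,b} satisfies |σ_{a,b}| ≤ C ψ(h_{a,b})/h_{a,b} for an absolute constant C > 0; consequently, if ∑_{h=1}^∞ ψ(h) < ∞ then ∑_{(a,b) ∈ ℤ_{≥0}²\{0}} |σ_{a,b}| < ∞. -/

import Mathlib

open MeasureTheory Filter Set

/-- The set `σ_{a,b}(c) = {(x,y) ∈ [0,1]² : |a²x + b²y − c²| < ψ(h_{a,b})}`,
where `h_{a,b} = max(a,b)`. -/
def sigC (ψ : ℝ → ℝ) (a b c : ℕ) : Set (EuclideanSpace ℝ (Fin 2)) :=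
  {p | p 0 ∈ Set.Icc (0 : ℝ) 1 ∧ p 1 ∈ Set.Icc (0 : ℝ) 1 ∧
    |(a : ℝ) ^ 2 * p 0 + (b : ℝ) ^ 2 * p 1 - (c : ℝ) ^ 2| < ψ ((max a b : ℕ) : ℝ)}

/-- The set `σ_{a,b} = ⋃_{c ∈ ℤ_{≥0}} σ_{a,b}(c)`. -/
def sigU (ψ : ℝ → ℝ) (a b : ℕ) : Set (EuclideanSpace ℝ (Fin 2)) :=
  ⋃ c : ℕ, sigC ψ a b c

/-- The square `Ω = [ε,1]²`. -/
def unitSq (ε : ℝ) : Set (EuclideanSpace ℝ (Fin 2)) :=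
  {p | p 0 ∈ Set.Icc ε 1 ∧ p 1 ∈ Set.Icc ε 1}

/-! The piece `σ_{a,b}(c)` is the unit square cut by a strip of width `2ψ(h)/h²`, measured along
the axis whose coefficient is `h² = max(a², b²)`. When `ψ(h) < h/4` the inequality
`c² < a² + b² + ψ(h) < 4h²` leaves at most `2h` values of `c`, whence `|σ_{a,b}| ≤ 4ψ(h)/h`;
otherwise this bound exceeds `1 ≥ |σ_{a,b}|`. Since at most `2h + 1` pairs have `max(a, b) = h`,
the series `∑ |σ_{a,b}|` is dominated by `∑ ψ(h)`. -/

open scoped ENNReal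

theorem volume_setOf_abs_mul_sub_lt {A : ℝ} (hA : 0 < A) (s δ : ℝ) :
    volume {x : ℝ | |A * x - s| < δ} = ENNReal.ofReal (2 * δ / A) := by
  have : {x : ℝ | |A * x - s| < δ} = Ioo ((s - δ) / A) ((s + δ) / A) := by
    ext x
    simp only [mem_ofPred_eq, mem_Ioo, abs_lt, div_lt_iff₀ hA, lt_div_iff₀ hA]
    constructor <;> rintro ⟨h₁, h₂⟩ <;> constructor <;> linarith
  rw [this, Real.volume_Ioo]
  congr 1
  ring

/-- The planar model of `sigC ψ a b c`: `A = a²`, `B = b²`, `t = c²`, `δ = ψ(max a b)`. -/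
def stripSet (A B t δ : ℝ) : Set (ℝ × ℝ) :=
  {q | q.1 ∈ Icc 0 1 ∧ q.2 ∈ Icc 0 1 ∧ |A * q.1 + B * q.2 - t| < δ}

theorem measurableSet_stripSet (A B t δ : ℝ) : MeasurableSet (stripSet A B t δ) :=
  (measurable_fst measurableSet_Icc).inter <| (measurable_snd measurableSet_Icc).inter <|
    measurableSet_lt (by fun_prop : Measurable fun q : ℝ × ℝ => |A * q.1 + B * q.2 - t|)
      measurable_const

theorem volume_stripSet_le_of_pos_left {A : ℝ} (hA : 0 < A) (B t δ : ℝ) :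
    volume (stripSet A B t δ) ≤ ENNReal.ofReal (2 * δ / A) := by
  have slice_le : ∀ y, volume ((fun x => (x, y)) ⁻¹' stripSet A B t δ) ≤
      (Icc (0 : ℝ) 1).indicator (fun _ => ENNReal.ofReal (2 * δ / A)) y := by
    intro y
    by_cases hy : y ∈ Icc (0 : ℝ) 1
    · rw [indicator_of_mem hy, ← volume_setOf_abs_mul_sub_lt hA (t - B * y)]
      refine measure_mono fun x hx => ?_
      rw [mem_ofPred_eq, show A * x - (t - B * y) = A * x + B * y - t by ring]
      exact hx.2.2
    · rw [indicator_of_notMem hy, nonpos_iff_eq_zero, measure_eq_zero_iff_ae_notMem]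
      exact ae_of_all _ fun x hx => hy hx.2.1
  rw [Measure.volume_eq_prod, Measure.prod_apply_symm (measurableSet_stripSet A B t δ)]
  calc ∫⁻ y, volume ((fun x => (x, y)) ⁻¹' stripSet A B t δ)
      ≤ ∫⁻ y, (Icc (0 : ℝ) 1).indicator (fun _ => ENNReal.ofReal (2 * δ / A)) y :=
        lintegral_mono slice_le
    _ = ENNReal.ofReal (2 * δ / A) := by simp [lintegral_indicator measurableSet_Icc]

theorem preimage_swap_stripSet (A B t δ : ℝ) :
    Prod.swap ⁻¹' stripSet A B t δ = stripSet B A t δ := by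
  ext q
  simp only [stripSet, mem_preimage, mem_ofPred_eq, Prod.fst_swap, Prod.snd_swap, add_comm (A * _)]
  tauto

theorem volume_stripSet_le_of_pos_right (A : ℝ) {B : ℝ} (hB : 0 < B) (t δ : ℝ) :
    volume (stripSet A B t δ) ≤ ENNReal.ofReal (2 * δ / B) := by
  rw [← preimage_swap_stripSet, Measure.volume_eq_prod,
    (Measure.measurePreserving_swap (μ := volume) (ν := volume)).measure_preimage
      (measurableSet_stripSet B A t δ).nullMeasurableSet, ← Measure.volume_eq_prod]
  exact volume_stripSet_le_of_pos_left hB A t δ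

theorem volume_stripSet_le_max {A B : ℝ} (h : 0 < max A B) (t δ : ℝ) :
    volume (stripSet A B t δ) ≤ ENNReal.ofReal (2 * δ / max A B) := by
  rcases le_total A B with hAB | hBA
  · rw [max_eq_right hAB] at h ⊢
    exact volume_stripSet_le_of_pos_right A h t δ
  · rw [max_eq_left hBA] at h ⊢
    exact volume_stripSet_le_of_pos_left h B t δ

theorem lt_add_add_of_mem_stripSet {A B t δ : ℝ} {q : ℝ × ℝ} (hq : q ∈ stripSet A B t δ)
    (hA : 0 ≤ A) (hB : 0 ≤ B) : t < A + B + δ := by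
  obtain ⟨⟨-, hx⟩, ⟨-, hy⟩, hlt⟩ := hq
  nlinarith [neg_lt_of_abs_lt hlt]

theorem volume_iUnion_stripSet_le {a b : ℕ} (hab : 0 < max a b) (δ : ℝ) :
    volume (⋃ c : ℕ, stripSet ((a : ℝ) ^ 2) ((b : ℝ) ^ 2) ((c : ℝ) ^ 2) δ) ≤
      ENNReal.ofReal (4 * δ / (max a b : ℕ)) := by
  set S := fun c : ℕ => stripSet ((a : ℝ) ^ 2) ((b : ℝ) ^ 2) ((c : ℝ) ^ 2) δ
  set H : ℝ := ((max a b : ℕ) : ℝ) with hH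
  have hH1 : 1 ≤ H := by rw [hH]; exact_mod_cast hab
  have hHsq : max ((a : ℝ) ^ 2) ((b : ℝ) ^ 2) = H ^ 2 := by
    rw [hH]; exact_mod_cast ((Nat.pow_left_strictMono two_ne_zero).monotone.map_max).symm
  rcases le_or_gt H (4 * δ) with hδ | hδ
  · calc volume (⋃ c, S c) ≤ volume (Icc (0 : ℝ) 1 ×ˢ Icc (0 : ℝ) 1) :=
          measure_mono <| iUnion_subset fun _ q hq => ⟨hq.1, hq.2.1⟩
      _ = 1 := by rw [Measure.volume_eq_prod, Measure.prod_prod]; simp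
      _ ≤ ENNReal.ofReal (4 * δ / H) :=
          ENNReal.one_le_ofReal.2 <| (one_le_div (by linarith)).2 hδ
  have few_c : (⋃ c, S c) ⊆ ⋃ c ∈ Finset.range (2 * max a b), S c := by
    refine iUnion_subset fun c q hq => mem_biUnion (Finset.mem_range.2 ?_) hq
    have hc := lt_add_add_of_mem_stripSet hq (by positivity) (by positivity)
    have ha : (a : ℝ) ^ 2 ≤ H ^ 2 := by rw [← hHsq]; exact le_max_left _ _
    have hb : (b : ℝ) ^ 2 ≤ H ^ 2 := by rw [← hHsq]; exact le_max_right _ _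
    have : (c : ℝ) < 2 * H := lt_of_pow_lt_pow_left₀ 2 (by positivity) (by nlinarith)
    rw [← Nat.cast_lt (α := ℝ), Nat.cast_mul, Nat.cast_ofNat, ← hH]
    exact this
  calc volume (⋃ c, S c) ≤ ∑ c ∈ Finset.range (2 * max a b), volume (S c) :=
        (measure_mono few_c).trans (measure_biUnion_finset_le _ _)
    _ ≤ (Finset.range (2 * max a b)).card • ENNReal.ofReal (2 * δ / H ^ 2) :=
        Finset.sum_le_card_nsmul _ _ _ fun _ _ => hHsq ▸ volume_stripSet_le_max (by
          rw [hHsq]; positivity) _ δ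
    _ = ENNReal.ofReal (4 * δ / H) := by
        rw [Finset.card_range, nsmul_eq_mul, ← ENNReal.ofReal_natCast,
          ← ENNReal.ofReal_mul (by positivity), Nat.cast_mul, Nat.cast_ofNat, ← hH]
        congr 1
        field_simp
        ring

theorem volume_sigU_le (ψ : ℝ → ℝ) {a b : ℕ} (hab : 0 < max a b) :
    volume (sigU ψ a b) ≤
      ENNReal.ofReal (4 * ψ ((max a b : ℕ) : ℝ) / ((max a b : ℕ) : ℝ)) := by
  have toProd := (volume_preserving_piFinTwo fun _ => ℝ).comp
    (EuclideanSpace.volume_preserving_symm_measurableEquiv_toLp (Fin 2))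
  have : sigU ψ a b =
      (MeasurableEquiv.piFinTwo (fun _ => ℝ) ∘ (MeasurableEquiv.toLp 2 (Fin 2 → ℝ)).symm) ⁻¹'
        ⋃ c : ℕ, stripSet ((a : ℝ) ^ 2) ((b : ℝ) ^ 2) ((c : ℝ) ^ 2)
          (ψ ((max a b : ℕ) : ℝ)) := by
    rw [preimage_iUnion]
    rfl
  rw [this, toProd.measure_preimage
    (MeasurableSet.iUnion fun c => measurableSet_stripSet _ _ _ _).nullMeasurableSet]
  exact volume_iUnion_stripSet_le hab _

theorem tsum_comp_max_le (f : ℕ → ℝ≥0∞) :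
    ∑' p : ℕ × ℕ, f (max p.1 p.2) ≤ 2 * ∑' n : ℕ, (n + 1) * f n := by
  set G : ℕ × ℕ → ℝ≥0∞ := fun p => if p.2 ≤ p.1 then f p.1 else 0
  have tsum_G : ∑' p, G p = ∑' n : ℕ, (n + 1) * f n := by
    rw [ENNReal.tsum_prod']
    refine tsum_congr fun n => ?_
    rw [tsum_eq_sum (s := Finset.range (n + 1)) fun m hm => by simp at hm; simp [G]; omega,
      Finset.sum_ite_of_true fun m hm => Nat.lt_succ_iff.1 (Finset.mem_range.1 hm)]
    simp
  calc ∑' p : ℕ × ℕ, f (max p.1 p.2) ≤ ∑' p, (G p + G p.swap) := by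
        refine ENNReal.tsum_le_tsum fun p => ?_
        rcases le_total p.2 p.1 with h | h
        · simp [G, h]
        · simp [G, h]
    _ = 2 * ∑' n : ℕ, (n + 1) * f n := by
        rw [ENNReal.tsum_add, show ∑' p : ℕ × ℕ, G p.swap = ∑' p, G p from
          (Equiv.prodComm ℕ ℕ).tsum_eq G, tsum_G, two_mul]

theorem tsum_succ_mul_ofReal_div_lt_top {u : ℕ → ℝ} (hu : ∀ n, 0 < n → 0 ≤ u n)
    (hsum : Summable fun n => u (n + 1)) :
    ∑' n : ℕ, (n + 1) * ENNReal.ofReal (u n / n) < ⊤ := by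
  refine lt_of_le_of_lt (ENNReal.tsum_le_tsum fun n => ?_)
    (((summable_nat_add_iff 1).1 hsum).mul_left 2).tsum_ofReal_lt_top
  rcases Nat.eq_zero_or_pos n with rfl | hn
  · simp -- `u 0 / 0 = 0`
  · have hn' : (0 : ℝ) < n := by exact_mod_cast hn
    rw [← ENNReal.ofReal_natCast, ← ENNReal.ofReal_one,
      ← ENNReal.ofReal_add (by positivity) zero_le_one, ← ENNReal.ofReal_mul (by positivity)]
    refine ENNReal.ofReal_le_ofReal ?_
    rw [← mul_div_assoc, div_le_iff₀ hn']
    have hn1 : (1 : ℝ) ≤ n := by exact_mod_cast hn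
    nlinarith [mul_nonneg (hu n hn) (sub_nonneg.2 hn1)]

theorem tsum_volume_sigU_lt_top {ψ : ℝ → ℝ} (hψ : ∀ x : ℝ, 0 < x → 0 < ψ x)
    (hsum : Summable fun h : ℕ => ψ ((h : ℝ) + 1)) :
    ∑' p : {p : ℕ × ℕ // p ≠ (0, 0)}, volume (sigU ψ p.1.1 p.1.2) < ⊤ := by
  set f : ℕ → ℝ≥0∞ := fun h => ENNReal.ofReal (4 * ψ h / h)
  have hpos (p : {p : ℕ × ℕ // p ≠ (0, 0)}) : 0 < max p.1.1 p.1.2 :=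
    Nat.pos_of_ne_zero fun h => p.2 (Prod.ext (by omega) (by omega))
  calc ∑' p : {p : ℕ × ℕ // p ≠ (0, 0)}, volume (sigU ψ p.1.1 p.1.2)
      ≤ ∑' p : {p : ℕ × ℕ // p ≠ (0, 0)}, f (max p.1.1 p.1.2) :=
        ENNReal.tsum_le_tsum fun p => volume_sigU_le ψ (hpos p)
    _ ≤ ∑' p : ℕ × ℕ, f (max p.1 p.2) :=
        ENNReal.tsum_comp_le_tsum_of_injective Subtype.val_injective _
    _ ≤ 2 * ∑' n : ℕ, (n + 1) * f n := tsum_comp_max_le f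
    _ < ⊤ := ENNReal.mul_lt_top ENNReal.ofNat_lt_top <|
        tsum_succ_mul_ofReal_div_lt_top (u := fun n => 4 * ψ n)
          (fun n hn => by have := hψ n (by exact_mod_cast hn); positivity)
          (by simpa only [Nat.cast_add, Nat.cast_one] using hsum.mul_left 4)

theorem sigU_volume_le_and_summable :
    (∃ C : ℝ, 0 < C ∧
      ∀ ψ : ℝ → ℝ,
        (∀ x : ℝ, 0 < x → 0 < ψ x) →
        AntitoneOn ψ (Set.Ioi 0) →
        Tendsto ψ atTop (nhds 0) →
        ∀ a b : ℕ, 0 < a + b →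
          volume (sigU ψ a b) ≤
            ENNReal.ofReal (C * ψ ((max a b : ℕ) : ℝ) / ((max a b : ℕ) : ℝ))) ∧
    (∀ ψ : ℝ → ℝ,
      (∀ x : ℝ, 0 < x → 0 < ψ x) →
      AntitoneOn ψ (Set.Ioi 0) →
      Tendsto ψ atTop (nhds 0) →
      Summable (fun h : ℕ => ψ ((h : ℝ) + 1)) →
        ∑' p : {p : ℕ × ℕ // p ≠ (0, 0)}, volume (sigU ψ p.1.1 p.1.2) < ⊤) :=
  ⟨⟨4, by norm_num, fun ψ _ _ _ a b hab => volume_sigU_le ψ (by omega)⟩,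
   fun ψ hψ _ _ hsum => tsum_volume_sigU_lt_top hψ hsum⟩
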